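/- arXiv:1103.1165 — 2 statements merged into one kernel-verified Lean document; each statement's English description precedes it below -/
import Mathlib

section
/- Let J = { i : A_i < ∞ }. For every x ∈ ℝ^d_+, if F(x) > F(0) + ⟨x, B⟩ then Σ_{i∈J} x_i/A_i > 1. -/
open Set
open scoped Classical

noncomputable section

/-- The nonnegative orthant of `ℝ^d` (with the Euclidean structure). -/
def orthant (d : ℕ) : Set (EuclideanSpace ℝ (Fin d)) := {x | ∀ i, 0 ≤ x i}

/-- The subdifferential (set of subgradients) of a function `φ : ℝ₊ → ℝ` at a point `t`. -/
def subdiff (φ : ℝ → ℝ) (t : ℝ) : Set ℝ :=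
  {v | ∀ s : ℝ, 0 ≤ s → φ t + v * (s - t) ≤ φ s}

/-- `Fi F i t = F (t • e_i)`, the restriction of `F` to the `i`-th coordinate axis. -/
def Fi {d : ℕ} (F : EuclideanSpace ℝ (Fin d) → ℝ) (i : Fin d) (t : ℝ) : ℝ :=
  F (t • EuclideanSpace.single i (1 : ℝ))

/-- The set `{t > 0 : (F_i(t) + Δ - F(0))/t ∈ ∂F_i(t)}` defining `A_i`. -/
def setA {d : ℕ} (F : EuclideanSpace ℝ (Fin d) → ℝ) (Δ : ℝ) (i : Fin d) : Set ℝ :=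
  {t | 0 < t ∧ (Fi F i t + Δ - F 0) / t ∈ subdiff (Fi F i) t}

/-- `A_i` (finite value; `A_i = ∞` corresponds to `setA F Δ i` being empty). -/
def Avar {d : ℕ} (F : EuclideanSpace ℝ (Fin d) → ℝ) (Δ : ℝ) (i : Fin d) : ℝ :=
  sInf (setA F Δ i)

/-- `B_i = (F_i(A_i) + Δ - F(0))/A_i` if `A_i < ∞`, and
`B_i = sup ⋃_{t>0} ∂F_i(t)` otherwise. -/
def Bvar {d : ℕ} (F : EuclideanSpace ℝ (Fin d) → ℝ) (Δ : ℝ) (i : Fin d) : ℝ :=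
  if (setA F Δ i).Nonempty then (Fi F i (Avar F Δ i) + Δ - F 0) / Avar F Δ i
  else sSup (⋃ t ∈ Ioi (0 : ℝ), subdiff (Fi F i) t)

/-- The inner product `⟨B, x⟩`. -/
def Bdot {d : ℕ} (F : EuclideanSpace ℝ (Fin d) → ℝ) (Δ : ℝ)
    (x : EuclideanSpace ℝ (Fin d)) : ℝ :=
  ∑ i, Bvar F Δ i * x i

/-- The set `{t > 0 : F(0) + ⟨B, t·x/‖x‖⟩ ≥ Δ + F(t·x/‖x‖)}` defining `H(x)`. -/
def setH {d : ℕ} (F : EuclideanSpace ℝ (Fin d) → ℝ) (Δ : ℝ)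
    (x : EuclideanSpace ℝ (Fin d)) : Set ℝ :=
  {t | 0 < t ∧ Δ + F ((t / ‖x‖) • x) ≤ F 0 + Bdot F Δ ((t / ‖x‖) • x)}

/-- The game analogue `R` of the concave envelope: `R(0) = F(0)`; for `x ≠ 0`,
`R(x) = F(x) + Δ` if `‖x‖ ≥ H(x)` (i.e. `setH F Δ x` is nonempty with `sInf ≤ ‖x‖`),
and `R(x) = F(0) + ⟨B, x⟩` if `‖x‖ < H(x)`. -/
def Rfun {d : ℕ} (F : EuclideanSpace ℝ (Fin d) → ℝ) (Δ : ℝ)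
    (x : EuclideanSpace ℝ (Fin d)) : ℝ :=
  if x = 0 then F 0
  else if (setH F Δ x).Nonempty ∧ sInf (setH F Δ x) ≤ ‖x‖ then F x + Δ
  else F 0 + Bdot F Δ x

/-- Membership in the class `𝒢`: `f : ℝ^d₊ → ℝ₊` continuous, `F ≤ f ≤ F + Δ`, and `f`
is concave on every convex subset `D` of the orthant on which `f < F + Δ`. -/
def memG {d : ℕ} (F : EuclideanSpace ℝ (Fin d) → ℝ) (Δ : ℝ)
    (f : EuclideanSpace ℝ (Fin d) → ℝ) : Prop :=
  ContinuousOn f (orthant d) ∧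
  (∀ x ∈ orthant d, 0 ≤ f x) ∧
  (∀ x ∈ orthant d, F x ≤ f x ∧ f x ≤ F x + Δ) ∧
  (∀ D : Set (EuclideanSpace ℝ (Fin d)), D ⊆ orthant d → Convex ℝ D →
    (∀ x ∈ D, f x < F x + Δ) → ConcaveOn ℝ D f)

/-!
With `g y = F y - ⟨B, y⟩`, which is convex, `g (A i • e i) = g 0 - Δ` for `i ∈ J`, while for
`i ∉ J` we have `g (s • e i) ≤ g 0` for every `s ≥ 0`, because `B i` dominates every subgradient
of `F_i` (the right derivative being one). If `∑_{i ∈ J} x i / A i < 1`, then `x` is a convex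
combination of `0` and such axis points, so `g x ≤ g 0` by Jensen; continuity extends this to
the case `∑_{i ∈ J} x i / A i ≤ 1`. The Lipschitz bound gives `Δ ≤ 2 L A i`, so `A i > 0` and
`B i` is not a junk value of division by zero.
-/

open Filter Topology

section Subgradient

variable {φ : ℝ → ℝ} {L : NNReal} {t v : ℝ}

lemma le_of_mem_subdiff (hφ : LipschitzOnWith L φ (Ici 0)) (ht : 0 < t)
    (hv : v ∈ subdiff φ t) : v ≤ L := by
  have hstep := hv (2 * t) (by linarith)
  have hlip := hφ.dist_le_mul (2 * t) (mem_Ici.2 (by linarith)) t (mem_Ici.2 ht.le)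
  rw [Real.dist_eq, Real.dist_eq, abs_of_pos (by linarith : 0 < 2 * t - t)] at hlip
  have : v * t ≤ L * t := by nlinarith [le_abs_self (φ (2 * t) - φ t)]
  exact le_of_mul_le_mul_right this ht

lemma rightDeriv_mem_subdiff (hφ : ConvexOn ℝ (Ici 0) φ) (ht : 0 < t) :
    derivWithin φ (Ioi t) t ∈ subdiff φ t := by
  have ht' : t ∈ interior (Ici (0 : ℝ)) := by rwa [interior_Ici]
  intro s hs
  rcases lt_trichotomy s t with hst | rfl | hts
  · have hslope := (hφ.slope_le_leftDeriv_of_mem_interior hs ht' hst).trans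
      (hφ.leftDeriv_le_rightDeriv_of_mem_interior ht')
    rw [slope_def_field, div_le_iff₀ (by linarith)] at hslope
    linarith
  · simp
  · have hslope := hφ.rightDeriv_le_slope_of_mem_interior ht' (mem_Ici.2 hs) hts
    rw [slope_def_field, le_div_iff₀ (by linarith)] at hslope
    linarith

lemma le_add_sSup_subdiff_mul (hφc : ConvexOn ℝ (Ici 0) φ) (hφl : LipschitzOnWith L φ (Ici 0))
    {s : ℝ} (hs : 0 ≤ s) : φ s ≤ φ 0 + sSup (⋃ t ∈ Ioi (0 : ℝ), subdiff φ t) * s := by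
  rcases hs.eq_or_lt with rfl | hs
  · simp
  have hbdd : BddAbove (⋃ t ∈ Ioi (0 : ℝ), subdiff φ t) := by
    refine ⟨L, fun v hv => ?_⟩
    simp only [mem_iUnion, mem_Ioi] at hv
    obtain ⟨t, ht, hvt⟩ := hv
    exact le_of_mem_subdiff hφl ht hvt
  have hsub := rightDeriv_mem_subdiff hφc hs
  have hle : derivWithin φ (Ioi s) s ≤ sSup (⋃ t ∈ Ioi (0 : ℝ), subdiff φ t) :=
    le_csSup hbdd (mem_biUnion (mem_Ioi.2 hs) hsub)
  have hzero := hsub 0 le_rfl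
  nlinarith

lemma le_two_mul_of_mem_subdiff {Δ : ℝ} (hφ : LipschitzOnWith L φ (Ici 0)) (ht : 0 < t)
    (h : (φ t + Δ - φ 0) / t ∈ subdiff φ t) : Δ ≤ 2 * L * t := by
  have hslope := (div_le_iff₀ ht).1 (le_of_mem_subdiff hφ ht h)
  have hlip := hφ.dist_le_mul 0 (mem_Ici.2 le_rfl) t (mem_Ici.2 ht.le)
  rw [Real.dist_eq, Real.dist_eq, zero_sub, abs_neg, abs_of_pos ht] at hlip
  linarith [le_abs_self (φ 0 - φ t)]

end Subgradient

section Orthant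

variable {d : ℕ} {F : EuclideanSpace ℝ (Fin d) → ℝ} {Δ : ℝ} {L : NNReal} {i : Fin d}

lemma smul_single_mem_orthant (i : Fin d) {t : ℝ} (ht : 0 ≤ t) :
    t • EuclideanSpace.single i (1 : ℝ) ∈ orthant d := by
  intro j
  by_cases hji : j = i <;> simp [hji, ht]

lemma Fi_zero : Fi F i 0 = F 0 := by simp [Fi]

lemma convexOn_Fi (hF : ConvexOn ℝ (orthant d) F) (i : Fin d) : ConvexOn ℝ (Ici 0) (Fi F i) :=
  (hF.comp_linearMap (LinearMap.toSpanSingleton ℝ _ (EuclideanSpace.single i 1))).subset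
    (fun _ ht => smul_single_mem_orthant i ht) (convex_Ici 0)

lemma lipschitzOnWith_Fi (hF : LipschitzOnWith L F (orthant d)) (i : Fin d) :
    LipschitzOnWith L (Fi F i) (Ici 0) := by
  refine LipschitzOnWith.of_dist_le_mul fun s hs t ht => ?_
  refine (hF.dist_le_mul _ (smul_single_mem_orthant i hs) _ (smul_single_mem_orthant i ht)).trans ?_
  rw [dist_eq_norm, ← sub_smul, norm_smul, PiLp.norm_single, norm_one, mul_one,
    ← dist_eq_norm]

lemma Avar_pos (hΔ : 0 < Δ) (hF : LipschitzOnWith L F (orthant d)) (hne : (setA F Δ i).Nonempty) :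
    0 < Avar F Δ i := by
  have hbound : ∀ t ∈ setA F Δ i, Δ / (2 * L + 1) ≤ t := by
    rintro t ⟨ht, hsub⟩
    rw [← Fi_zero (F := F) (i := i)] at hsub
    have := le_two_mul_of_mem_subdiff (lipschitzOnWith_Fi hF i) ht hsub
    rw [div_le_iff₀ (by positivity)]
    linarith
  exact (div_pos hΔ (by positivity)).trans_le (le_csInf hne hbound)

lemma Fi_Avar (hΔ : 0 < Δ) (hF : LipschitzOnWith L F (orthant d)) (hne : (setA F Δ i).Nonempty) :
    Fi F i (Avar F Δ i) + Δ = F 0 + Bvar F Δ i * Avar F Δ i := by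
  rw [Bvar, if_pos hne, div_mul_cancel₀ _ (Avar_pos hΔ hF hne).ne']
  ring

lemma Fi_le_of_not_nonempty (hFc : ConvexOn ℝ (orthant d) F) (hFl : LipschitzOnWith L F (orthant d))
    (hemp : ¬(setA F Δ i).Nonempty) {s : ℝ} (hs : 0 ≤ s) : Fi F i s ≤ F 0 + Bvar F Δ i * s := by
  rw [Bvar, if_neg hemp, ← Fi_zero (F := F) (i := i)]
  exact le_add_sSup_subdiff_mul (convexOn_Fi hFc i) (lipschitzOnWith_Fi hFl i) hs

lemma Bdot_smul (c : ℝ) (x : EuclideanSpace ℝ (Fin d)) :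
    Bdot F Δ (c • x) = c * Bdot F Δ x := by
  simp only [Bdot, PiLp.smul_apply, smul_eq_mul, Finset.mul_sum]
  exact Finset.sum_congr rfl fun _ _ => by ring

lemma le_add_sum_of_weights (hF : ConvexOn ℝ (orthant d) F) (b w s : Fin d → ℝ)
    (hw : ∀ i, 0 ≤ w i) (hw₁ : ∑ i, w i ≤ 1) (hs : ∀ i, 0 ≤ s i)
    (hFs : ∀ i, Fi F i (s i) ≤ F 0 + b i * s i) {y : EuclideanSpace ℝ (Fin d)}
    (hy : ∀ i, w i * s i = y i) : F y ≤ F 0 + ∑ i, b i * y i := by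
  have hdecomp : y = (1 - ∑ i, w i) • 0 + ∑ i, w i • (s i • EuclideanSpace.single i (1 : ℝ)) := by
    ext j
    simp [← hy, Pi.single_apply]
  have hjensen := hF.map_add_sum_le (t := Finset.univ) (fun i _ => hw i)
    (sub_add_cancel _ _) (fun i _ => smul_single_mem_orthant i (hs i)) (by linarith)
    (show (0 : EuclideanSpace ℝ (Fin d)) ∈ orthant d from fun j => by simp)
  rw [← hdecomp] at hjensen
  calc F y ≤ (1 - ∑ i, w i) * F 0 + ∑ i, w i * Fi F i (s i) := hjensen
    _ ≤ (1 - ∑ i, w i) * F 0 + ∑ i, w i * (F 0 + b i * s i) := by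
      gcongr with i
      exacts [hw i, hFs i]
    _ = F 0 + ∑ i, b i * y i := by
      simp only [← hy, mul_add, Finset.sum_add_distrib, ← Finset.sum_mul, mul_left_comm (b _)]
      ring

/-- `y` is a convex combination of `0`, the points `A i • e i` for `i ∈ J`, and points far out on
the other axes, which share the leftover weight `r` equally. -/
lemma le_add_Bdot_of_sum_lt_one (hΔ : 0 < Δ) (hFc : ConvexOn ℝ (orthant d) F)
    (hFl : LipschitzOnWith L F (orthant d)) {y : EuclideanSpace ℝ (Fin d)} (hy : y ∈ orthant d)
    (hlt : ∑ i ∈ Finset.univ.filter (fun i => (setA F Δ i).Nonempty), y i / Avar F Δ i < 1) :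
    F y ≤ F 0 + Bdot F Δ y := by
  set r := 1 - ∑ i ∈ Finset.univ.filter (fun i => (setA F Δ i).Nonempty), y i / Avar F Δ i
  have hr : 0 < r := sub_pos.2 hlt
  have hrest : ∑ i ∈ Finset.univ.filter (fun i => ¬(setA F Δ i).Nonempty), r / d ≤ r := by
    refine (Finset.sum_le_sum_of_subset_of_nonneg (Finset.filter_subset _ _)
      fun _ _ _ => by positivity).trans ?_
    rcases eq_or_ne d 0 with rfl | hd
    · simp [hr.le]
    · simp [mul_div_cancel₀ r (Nat.cast_ne_zero.2 hd : (d : ℝ) ≠ 0)]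
  refine le_add_sum_of_weights hFc (Bvar F Δ)
    (fun i => if (setA F Δ i).Nonempty then y i / Avar F Δ i else r / d)
    (fun i => if (setA F Δ i).Nonempty then Avar F Δ i else y i / (r / d)) ?_ ?_ ?_ ?_ ?_
  · intro i
    split_ifs with hne
    exacts [div_nonneg (hy i) (Avar_pos hΔ hFl hne).le, by positivity]
  · rw [Finset.sum_ite]
    linarith
  · intro i
    split_ifs with hne
    exacts [(Avar_pos hΔ hFl hne).le, div_nonneg (hy i) (by positivity)]
  · intro i
    split_ifs with hne
    · linarith [Fi_Avar hΔ hFl hne]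
    · exact Fi_le_of_not_nonempty hFc hFl hne (div_nonneg (hy i) (by positivity))
  · intro i
    have hd : (d : ℝ) ≠ 0 := Nat.cast_ne_zero.2 i.pos.ne'
    split_ifs with hne
    exacts [div_mul_cancel₀ _ (Avar_pos hΔ hFl hne).ne', mul_div_cancel₀ _ (by positivity)]

lemma le_add_Bdot_of_sum_le_one (hΔ : 0 < Δ) (hFc : ConvexOn ℝ (orthant d) F)
    (hFl : LipschitzOnWith L F (orthant d)) {x : EuclideanSpace ℝ (Fin d)} (hx : x ∈ orthant d)
    (hle : ∑ i ∈ Finset.univ.filter (fun i => (setA F Δ i).Nonempty), x i / Avar F Δ i ≤ 1) :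
    F x ≤ F 0 + Bdot F Δ x := by
  have hscaled : ∀ c ∈ Ioo (0 : ℝ) 1, F (c • x) ≤ F 0 + c * Bdot F Δ x := by
    rintro c ⟨hc0, hc1⟩
    rw [← Bdot_smul]
    refine le_add_Bdot_of_sum_lt_one hΔ hFc hFl (fun i => mul_nonneg hc0.le (hx i)) ?_
    calc ∑ i ∈ Finset.univ.filter (fun i => (setA F Δ i).Nonempty), (c • x) i / Avar F Δ i
        = c * ∑ i ∈ Finset.univ.filter (fun i => (setA F Δ i).Nonempty), x i / Avar F Δ i := by
          simp only [PiLp.smul_apply, smul_eq_mul, Finset.mul_sum, mul_div_assoc]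
      _ ≤ c * 1 := by gcongr
      _ < 1 := by linarith
  have hsmul : Tendsto (fun c : ℝ => c • x) (𝓝[<] 1) (𝓝[orthant d] x) := by
    refine tendsto_nhdsWithin_iff.2 ⟨?_, ?_⟩
    · exact ((continuous_id.smul continuous_const).tendsto' 1 x (one_smul ℝ x)).mono_left
        nhdsWithin_le_nhds
    · filter_upwards [Ioo_mem_nhdsLT (zero_lt_one' ℝ)] with c hc
      exact fun i => mul_nonneg hc.1.le (hx i)
  have haffine : Tendsto (fun c : ℝ => F 0 + c * Bdot F Δ x) (𝓝[<] 1) (𝓝 (F 0 + Bdot F Δ x)) :=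
    ((continuous_const.add (continuous_id.mul continuous_const)).tendsto' 1 _ (by simp)).mono_left
      nhdsWithin_le_nhds
  exact le_of_tendsto_of_tendsto ((hFl.continuousOn x hx).tendsto.comp hsmul) haffine
    (eventually_of_mem (Ioo_mem_nhdsLT (zero_lt_one' ℝ)) hscaled)

end Orthant

theorem sum_gt_one_of_F_gt_general {d : ℕ} (Δ : ℝ) (hΔ : 0 < Δ)
    (F : EuclideanSpace ℝ (Fin d) → ℝ)
    (hFconv : ConvexOn ℝ (orthant d) F)
    (L : NNReal) (hFlip : LipschitzOnWith L F (orthant d))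
    (x : EuclideanSpace ℝ (Fin d)) (hx : x ∈ orthant d)
    (h : F 0 + Bdot F Δ x < F x) :
    1 < ∑ i ∈ Finset.univ.filter (fun i => (setA F Δ i).Nonempty), x i / Avar F Δ i :=
  lt_of_not_ge fun hle => h.not_ge (le_add_Bdot_of_sum_le_one hΔ hFconv hFlip hx hle)

/-- Let `J = {i : A_i < ∞}`. If `F(x) > F(0) + ⟨x, B⟩` for some `x` in the
nonnegative orthant, then `Σ_{i ∈ J} x_i / A_i > 1`. -/
theorem sum_gt_one_of_F_gt {d : ℕ} (hd : 0 < d) (Δ : ℝ) (hΔ : 0 < Δ)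
    (F : EuclideanSpace ℝ (Fin d) → ℝ)
    (hF0 : ∀ x ∈ orthant d, 0 ≤ F x)
    (hFconv : ConvexOn ℝ (orthant d) F)
    (L : NNReal) (hFlip : LipschitzOnWith L F (orthant d))
    (x : EuclideanSpace ℝ (Fin d)) (hx : x ∈ orthant d)
    (h : F 0 + Bdot F Δ x < F x) :
    1 < ∑ i ∈ Finset.univ.filter (fun i => (setA F Δ i).Nonempty), x i / Avar F Δ i :=
  sum_gt_one_of_F_gt_general Δ hΔ F hFconv L hFlip x hx h

end
end

section
/- Game call–put option with large penalty: here d = 2, F(x₁,x₂) = (x₁−x₂+K)^+ for a constant K > 0, and Δ > K. The function R(x₁,x₂) = x₁ + K for (x₁,x₂) ∉ [Δ−K,∞)×[Δ,∞) and R(x₁,x₂) = (x₁ − x₂ + K)^+ + Δ for (x₁,x₂) ∈ [Δ−K,∞)×[Δ,∞) belongs to 𝒢 and is its minimal element: R(x) ≤ g(x) for every g ∈ 𝒢 and every x ∈ ℝ²_+. -/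
/-!
Let `𝒰 = {g < F + Δ}`. Restricted to a ray `t ↦ P + t • v` in the quadrant, `g - φ` (for convex
`φ`) is concave on every interval inside `𝒰`. A concave function bounded below on a half-line is
nondecreasing, so a minimum principle follows: if `g - φ ≥ m` at the start of the ray and at every
point of the ray outside `𝒰`, then `g - φ ≥ m` on the whole ray.

With `φ = 0` on vertical rays this gives `g(x) ≥ min (x₁ + K) Δ`, hence `g ≥ x₁ + K` when
`x₁ < Δ - K`; with `φ(t) = t` on horizontal rays below height `Δ`, where `F + Δ ≥ x₁ + K`, it
gives `g ≥ x₁ + K` when `x₂ < Δ`. With `φ = F` it shows that once `g` reaches `F + Δ` along a ray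
it stays there; starting at the corner `(Δ - K, x₂)`, where the vertical bound already gives
`g ≥ Δ = F + Δ`, this yields `g ≥ F + Δ` on `[Δ - K, ∞) × [Δ, ∞)`. So
`g ≥ R = min (x₁ + K) (F + Δ)`, and `R` itself lies in `𝒢` because it equals the affine `x₁ + K`
wherever `R < F + Δ`.
-/

open Set
open scoped Classical

noncomputable section

/-- The nonnegative quadrant `ℝ²₊`. -/
def quadrant : Set (ℝ × ℝ) := {p | 0 ≤ p.1 ∧ 0 ≤ p.2}

/-- Membership in the class `𝒢` (two-dimensional case): `f : ℝ²₊ → ℝ₊` is continuous,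
`F ≤ f ≤ F + Δ` on `ℝ²₊`, and `f` is concave on every convex subset `D ⊆ ℝ²₊` on
which `f < F + Δ`. -/
def memG2 (F : ℝ × ℝ → ℝ) (Δ : ℝ) (f : ℝ × ℝ → ℝ) : Prop :=
  ContinuousOn f quadrant ∧
  (∀ x ∈ quadrant, 0 ≤ f x) ∧
  (∀ x ∈ quadrant, F x ≤ f x ∧ f x ≤ F x + Δ) ∧
  (∀ D : Set (ℝ × ℝ), D ⊆ quadrant → Convex ℝ D →
    (∀ x ∈ D, f x < F x + Δ) → ConcaveOn ℝ D f)

theorem ConcaveOn.closure_of_continuousOn {E : Type*} [AddCommGroup E] [Module ℝ E]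
    [TopologicalSpace E] [IsTopologicalAddGroup E] [ContinuousSMul ℝ E] {s : Set E} {f : E → ℝ}
    (hf : ConcaveOn ℝ s f) (hfc : ContinuousOn f (closure s)) : ConcaveOn ℝ (closure s) f := by
  refine ⟨hf.1.closure, fun x hx y hy a b ha hb hab => ?_⟩
  have hxy : (x, y) ∈ closure (s ×ˢ s) := by rw [closure_prod_eq]; exact ⟨hx, hy⟩
  have hmaps : MapsTo (fun p : E × E => a • p.1 + b • p.2) (closure (s ×ˢ s)) (closure s) := by
    rw [closure_prod_eq]
    exact fun p hp => hf.1.closure hp.1 hp.2 ha hb hab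
  refine le_on_closure (fun p hp => hf.2 hp.1 hp.2 ha hb hab) ?_
    (hfc.comp (by fun_prop) hmaps) hxy
  rw [closure_prod_eq]
  exact ((hfc.comp continuousOn_fst fun _ hp => hp.1).const_smul a).add
    ((hfc.comp continuousOn_snd fun _ hp => hp.2).const_smul b)

theorem ConcaveOn.monotoneOn_of_bddBelow {h : ℝ → ℝ} {a : ℝ} (hf : ConcaveOn ℝ (Ici a) h)
    (hb : BddBelow (h '' Ici a)) : MonotoneOn h (Ici a) := by
  intro y hy z hz hyz
  rcases hyz.eq_or_lt with rfl | hyz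
  · rfl
  by_contra! hzy
  obtain ⟨L, hL⟩ := hb
  set σ := (h z - h y) / (z - y)
  have hσneg : σ < 0 := div_neg_of_neg_of_pos (by linarith) (by linarith)
  have hLz : L ≤ h z := hL (mem_image_of_mem h hz)
  -- far enough to the right, the chord of slope `σ < 0` drops below `L`
  set T := z + (h z - L + 1) / -σ
  have hzT : z < T := lt_add_of_pos_right z (div_pos (by linarith) (by linarith))
  have hT : T ∈ Ici a := le_trans hz hzT.le
  have hslope := hf.slope_anti_adjacent hy hT hyz hzT
  rw [div_le_iff₀ (by linarith)] at hslope
  have hTz : σ * (T - z) = -(h z - L + 1) := by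
    simp only [T, add_sub_cancel_left]
    rw [mul_div_assoc', div_neg, mul_div_cancel_left₀ _ hσneg.ne]
  have := hL (mem_image_of_mem h hT)
  linarith

theorem IsClosed.exists_last_le {B : Set ℝ} (hB : IsClosed B) {c x : ℝ} (hc : c ∈ B)
    (hcx : c ≤ x) : ∃ a ∈ B, a ∈ Icc c x ∧ ∀ t ∈ Ioc a x, t ∉ B := by
  obtain ⟨a, ⟨haB, ha⟩, hmax⟩ :=
    (isCompact_Icc.inter_left hB).exists_isGreatest ⟨c, hc, le_rfl, hcx⟩
  exact ⟨a, haB, ha, fun t ht htB => (hmax ⟨htB, ha.1.trans ht.1.le, ht.2⟩).not_gt ht.1⟩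

theorem IsClosed.exists_first_ge {B : Set ℝ} (hB : IsClosed B) {x : ℝ} (hx : x ∉ B) :
    (∀ t, x ≤ t → t ∉ B) ∨ ∃ d ∈ B, x < d ∧ ∀ t ∈ Ico x d, t ∉ B := by
  rcases (B ∩ Ici x).eq_empty_or_nonempty with hR | hR
  · exact Or.inl fun t ht htB => hR.subset ⟨htB, ht⟩
  obtain ⟨⟨hdB, hxd⟩, hmin⟩ := (hB.inter isClosed_Ici).isLeast_csInf hR ⟨x, fun t ht => ht.2⟩
  refine Or.inr ⟨_, hdB, hxd.lt_of_ne (fun e => hx (e ▸ hdB)), fun t ht htB => ?_⟩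
  exact (hmin ⟨htB, ht.1⟩).not_gt ht.2

theorem le_on_Ici_of_le_off_concave {h : ℝ → ℝ} {U : Set ℝ} {c m : ℝ}
    (hcont : ContinuousOn h (Ici c)) (hconc : ∀ I ⊆ U, Convex ℝ I → ConcaveOn ℝ I h)
    (hbdd : BddBelow (h '' Ici c)) (hc : m ≤ h c) (hoff : ∀ t, c ≤ t → t ∉ U → m ≤ h t)
    {x : ℝ} (hcx : c ≤ x) : m ≤ h x := by
  set B := {t ∈ Ici c | m ≤ h t}
  have hB : IsClosed B := isClosed_Ici.isClosed_le continuousOn_const hcont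
  by_contra hxm
  have hxB : x ∉ B := fun hx => hxm hx.2
  have hgap : ∀ t, c ≤ t → t ∉ B → t ∈ U := fun t ht htB => by
    by_contra htU
    exact htB ⟨ht, hoff t ht htU⟩
  -- `x` lies in a gap `(a, d)` of the closed set `B`; the gap lies in `U`, where `h` is concave
  obtain ⟨a, ⟨-, hma⟩, ⟨hca, hax⟩, ha⟩ := hB.exists_last_le ⟨self_mem_Ici, hc⟩ hcx
  have hcont' : ∀ {s : Set ℝ}, s ⊆ Ici a → ContinuousOn h s :=
    fun hs => hcont.mono (hs.trans (Ici_subset_Ici.2 hca))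
  rcases hB.exists_first_ge hxB with hR | ⟨d, ⟨-, hmd⟩, hxd, hd⟩
  · have hIoi : Ioi a ⊆ U := fun t hat => hgap t (hca.trans hat.le) fun htB =>
      (le_total t x).elim (fun htx => ha t ⟨hat, htx⟩ htB) (fun hxt => hR t hxt htB)
    have hconc' := (hconc _ hIoi (convex_Ioi a)).closure_of_continuousOn
      (by rw [closure_Ioi]; exact hcont' subset_rfl)
    rw [closure_Ioi] at hconc'
    have hmono := hconc'.monotoneOn_of_bddBelow
      (hbdd.mono (image_mono (Ici_subset_Ici.2 hca)))
    exact hxm (hma.trans (hmono self_mem_Ici hax hax))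
  · have had : a < d := hax.trans_lt hxd
    have hIoo : Ioo a d ⊆ U := fun t ht => hgap t (hca.trans ht.1.le) fun htB =>
      (le_total t x).elim (fun htx => ha t ⟨ht.1, htx⟩ htB) (fun hxt => hd t ⟨hxt, ht.2⟩ htB)
    have hconc' := (hconc _ hIoo (convex_Ioo a d)).closure_of_continuousOn
      (by rw [closure_Ioo had.ne]; exact hcont' Icc_subset_Ici_self)
    rw [closure_Ioo had.ne] at hconc'
    exact hxm ((le_min hma hmd).trans
      (hconc'.min_le_of_mem_Icc (left_mem_Icc.2 had.le) (right_mem_Icc.2 had.le) ⟨hax, hxd.le⟩))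

theorem convex_quadrant : Convex ℝ quadrant :=
  (convex_Ici 0).prod (convex_Ici 0)

def ray (P v : ℝ × ℝ) : ℝ →ᵃ[ℝ] ℝ × ℝ := AffineMap.lineMap P (v + P)

@[simp]
theorem ray_apply (P v : ℝ × ℝ) (t : ℝ) : ray P v t = P + t • v := by
  simp [ray, AffineMap.lineMap_apply_module', add_comm]

theorem ray_mem_quadrant {P v : ℝ × ℝ} (hP : P ∈ quadrant) (hv : v ∈ quadrant) {t : ℝ}
    (ht : 0 ≤ t) : ray P v t ∈ quadrant := by
  rw [ray_apply]
  exact ⟨add_nonneg hP.1 (mul_nonneg ht hv.1), add_nonneg hP.2 (mul_nonneg ht hv.2)⟩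

@[simp]
theorem ray_zero_one (p t : ℝ) : ray (p, 0) (0, 1) t = (p, t) := by
  simp

@[simp]
theorem ray_one_zero (q t : ℝ) : ray (0, q) (1, 0) t = (t, q) := by
  simp

section Ray

variable {F g : ℝ × ℝ → ℝ} {Δ : ℝ} {P v : ℝ × ℝ}

theorem memG2.concaveOn_comp_ray (hg : memG2 F Δ g) {I : Set ℝ} (hI : Convex ℝ I)
    (hIg : ∀ t ∈ I, ray P v t ∈ quadrant ∧ g (ray P v t) < F (ray P v t) + Δ) :
    ConcaveOn ℝ I (g ∘ ray P v) :=
  ((hg.2.2.2 _ (image_subset_iff.2 fun t ht => (hIg t ht).1) (hI.affine_image _)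
    (forall_mem_image.2 fun t ht => (hIg t ht).2)).comp_affineMap _).subset
    (subset_preimage_image _ _) hI

theorem memG2.le_comp_ray_sub (hg : memG2 F Δ g) (hP : P ∈ quadrant) (hv : v ∈ quadrant)
    {φ : ℝ → ℝ} {c m : ℝ} (hc0 : 0 ≤ c) (hφ : ConvexOn ℝ (Ici c) φ)
    (hφc : ContinuousOn φ (Ici c)) (hbdd : BddBelow ((fun t => g (ray P v t) - φ t) '' Ici c))
    (hc : m ≤ g (ray P v c) - φ c)
    (hoff : ∀ t, c ≤ t → F (ray P v t) + Δ ≤ g (ray P v t) → m ≤ g (ray P v t) - φ t)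
    {t : ℝ} (ht : c ≤ t) : m ≤ g (ray P v t) - φ t := by
  have hq : MapsTo (ray P v) (Ici c) quadrant := fun t ht => ray_mem_quadrant hP hv (hc0.trans ht)
  refine le_on_Ici_of_le_off_concave (U := {t | c ≤ t ∧ g (ray P v t) < F (ray P v t) + Δ})
    ((hg.1.comp (ray P v).continuous_of_finiteDimensional.continuousOn hq).sub hφc)
    (fun I hIU hI => ?_) hbdd hc (fun t ht htU => hoff t ht (not_lt.1 fun h => htU ⟨ht, h⟩)) ht
  exact (hg.concaveOn_comp_ray hI fun t ht => ⟨hq (hIU ht).1, (hIU ht).2⟩).sub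
    (hφ.subset (fun t ht => (hIU ht).1) hI)

theorem memG2.add_le_comp_ray (hg : memG2 F Δ g) (hF : ConvexOn ℝ quadrant F)
    (hFc : ContinuousOn F quadrant) (hP : P ∈ quadrant) (hv : v ∈ quadrant) {c t : ℝ}
    (hc0 : 0 ≤ c) (hct : c ≤ t) (hc : F (ray P v c) + Δ ≤ g (ray P v c)) :
    F (ray P v t) + Δ ≤ g (ray P v t) := by
  have hq : MapsTo (ray P v) (Ici c) quadrant := fun t ht => ray_mem_quadrant hP hv (hc0.trans ht)
  have hbdd : BddBelow ((fun t => g (ray P v t) - (F ∘ ray P v) t) '' Ici c) := by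
    refine ⟨0, ?_⟩
    rintro _ ⟨t, ht, rfl⟩
    exact sub_nonneg.2 (hg.2.2.1 _ (hq ht)).1
  have := hg.le_comp_ray_sub hP hv (m := Δ) hc0 ((hF.comp_affineMap _).subset hq (convex_Ici c))
    (hFc.comp (ray P v).continuous_of_finiteDimensional.continuousOn hq) hbdd
    (by simp only [Function.comp_apply]; linarith)
    (fun t _ h => by simp only [Function.comp_apply]; linarith) hct
  simp only [Function.comp_apply] at this
  linarith

end Ray

def callPut (K : ℝ) (x : ℝ × ℝ) : ℝ := max (x.1 - x.2 + K) 0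

theorem convexOn_callPut (K : ℝ) : ConvexOn ℝ univ (callPut K) :=
  (((LinearMap.fst ℝ ℝ ℝ - LinearMap.snd ℝ ℝ ℝ).convexOn convex_univ).add_const K).sup
    (convexOn_const 0 convex_univ)

theorem continuous_callPut (K : ℝ) : Continuous (callPut K) := by
  unfold callPut
  fun_prop

theorem memG2_min_add {F ℓ : ℝ × ℝ → ℝ} {Δ : ℝ} (hℓ : ConcaveOn ℝ quadrant ℓ)
    (hℓc : ContinuousOn ℓ quadrant) (hFc : ContinuousOn F quadrant)
    (hF0 : ∀ x ∈ quadrant, 0 ≤ F x) (hFℓ : ∀ x ∈ quadrant, F x ≤ ℓ x) (hΔ : 0 ≤ Δ) :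
    memG2 F Δ (fun x => min (ℓ x) (F x + Δ)) := by
  refine ⟨ContinuousOn.inf hℓc (hFc.add continuousOn_const), fun x hx => ?_, fun x hx => ?_,
    fun D hDq hD hDlt => ?_⟩
  · exact le_min ((hF0 x hx).trans (hFℓ x hx)) (add_nonneg (hF0 x hx) hΔ)
  · exact ⟨le_min (hFℓ x hx) (le_add_of_nonneg_right hΔ), min_le_right _ _⟩
  · refine (hℓ.subset hDq hD).congr fun x hx => (min_eq_left ?_).symm
    by_contra! h
    exact (hDlt x hx).ne (min_eq_right h.le)

theorem memG2_callPut_min {K Δ : ℝ} (hK : 0 ≤ K) (hΔ : 0 ≤ Δ) :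
    memG2 (callPut K) Δ (fun x => min (x.1 + K) (callPut K x + Δ)) := by
  refine memG2_min_add ((((LinearMap.fst ℝ ℝ ℝ).concaveOn convex_univ).add_const K).subset
    (subset_univ _) convex_quadrant) (by fun_prop) (continuous_callPut K).continuousOn
    (fun x _ => le_max_right _ _) (fun x hx => max_le (by linarith [hx.2]) (by linarith [hx.1])) hΔ

theorem ite_callPut_eq_min (K Δ : ℝ) (x : ℝ × ℝ) :
    (if Δ - K ≤ x.1 ∧ Δ ≤ x.2 then callPut K x + Δ else x.1 + K) =
      min (x.1 + K) (callPut K x + Δ) := by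
  unfold callPut
  split_ifs with h
  · refine (min_eq_right ?_).symm
    have : max (x.1 - x.2 + K) 0 ≤ x.1 + K - Δ := max_le (by linarith [h.2]) (by linarith [h.1])
    linarith
  · refine (min_eq_left ?_).symm
    rw [not_and_or, not_le, not_le] at h
    rcases h with h | h
    · linarith [le_max_right (x.1 - x.2 + K) 0]
    · linarith [le_max_left (x.1 - x.2 + K) 0]

section CallPut

variable {K Δ : ℝ} {g : ℝ × ℝ → ℝ}

theorem memG2.min_le_apply (hg : memG2 (callPut K) Δ g) {p s : ℝ} (hp : 0 ≤ p) (hs : 0 ≤ s) :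
    min (p + K) Δ ≤ g (p, s) := by
  have hq : (p, (0 : ℝ)) ∈ quadrant := ⟨hp, le_rfl⟩
  have hv : ((0 : ℝ), (1 : ℝ)) ∈ quadrant := ⟨le_rfl, zero_le_one⟩
  have hbdd : BddBelow ((fun t => g (ray (p, 0) (0, 1) t) - 0) '' Ici 0) := by
    refine ⟨0, ?_⟩
    rintro _ ⟨t, ht, rfl⟩
    simpa using hg.2.1 _ (ray_mem_quadrant hq hv ht)
  have := hg.le_comp_ray_sub (φ := fun _ => 0) (m := min (p + K) Δ) hq hv le_rfl
    (convexOn_const 0 (convex_Ici 0)) continuousOn_const hbdd ?_ ?_ hs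
  all_goals simp only [ray_zero_one, sub_zero] at *
  · exact this
  · have : p + K ≤ callPut K (p, 0) := by simp [callPut]
    exact (min_le_left _ _).trans (this.trans (hg.2.2.1 (p, 0) hq).1)
  · intro t _ h
    exact (min_le_right _ _).trans ((le_add_of_nonneg_left (le_max_right _ _)).trans h)

theorem memG2.add_le_apply_of_lt (hg : memG2 (callPut K) Δ g) (hKΔ : K ≤ Δ) {t b : ℝ}
    (ht : 0 ≤ t) (hb : 0 ≤ b) (hbΔ : b < Δ) : t + K ≤ g (t, b) := by
  have hq : ((0 : ℝ), b) ∈ quadrant := ⟨le_rfl, hb⟩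
  have hv : ((1 : ℝ), (0 : ℝ)) ∈ quadrant := ⟨zero_le_one, le_rfl⟩
  have hbdd : BddBelow ((fun t => g (ray (0, b) (1, 0) t) - t) '' Ici 0) := by
    refine ⟨K - b, ?_⟩
    rintro _ ⟨t, ht, rfl⟩
    have := (hg.2.2.1 _ (ray_mem_quadrant hq hv ht)).1
    simp only [ray_one_zero, callPut] at this ⊢
    linarith [le_max_left (t - b + K) 0]
  have := hg.le_comp_ray_sub (φ := id) (m := K) hq hv le_rfl (convexOn_id (convex_Ici 0))
    continuousOn_id hbdd ?_ ?_ ht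
  all_goals simp only [ray_one_zero, id] at *
  · linarith
  · have := hg.min_le_apply le_rfl hb
    rwa [zero_add, min_eq_left hKΔ, ← sub_zero (g (0, b))] at this
  · intro t _ h
    simp only [callPut] at h
    linarith [le_max_left (t - b + K) 0]

theorem memG2.callPut_add_le_apply (hg : memG2 (callPut K) Δ g) (hKΔ : K ≤ Δ) {a b : ℝ}
    (ha : Δ - K ≤ a) (hb : Δ ≤ b) : callPut K (a, b) + Δ ≤ g (a, b) := by
  have hΔ : 0 ≤ Δ := by
    have := hg.2.2.1 _ (⟨le_rfl, le_rfl⟩ : ((0 : ℝ), (0 : ℝ)) ∈ quadrant)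
    linarith
  have hq : ((0 : ℝ), b) ∈ quadrant := ⟨le_rfl, hΔ.trans hb⟩
  have hv : ((1 : ℝ), (0 : ℝ)) ∈ quadrant := ⟨zero_le_one, le_rfl⟩
  have h := hg.add_le_comp_ray ((convexOn_callPut K).subset (subset_univ _) convex_quadrant)
    (continuous_callPut K).continuousOn hq hv (sub_nonneg.2 hKΔ) ha ?_
  · simpa only [ray_one_zero] using h
  have hF : callPut K (Δ - K, b) = 0 := max_eq_right (by linarith)
  have := hg.min_le_apply (sub_nonneg.2 hKΔ) hq.2
  rw [ray_one_zero, hF, zero_add]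
  rwa [sub_add_cancel, min_self] at this

theorem memG2.min_le (hg : memG2 (callPut K) Δ g) (hKΔ : K ≤ Δ) {x : ℝ × ℝ}
    (hx : x ∈ quadrant) : min (x.1 + K) (callPut K x + Δ) ≤ g x := by
  obtain ⟨a, b⟩ := x
  by_cases hS : Δ - K ≤ a ∧ Δ ≤ b
  · exact (min_le_right _ _).trans (hg.callPut_add_le_apply hKΔ hS.1 hS.2)
  refine (min_le_left _ _).trans ?_
  rcases not_and_or.1 hS with ha | hb
  · exact (min_eq_left (by linarith)).symm.trans_le (hg.min_le_apply hx.1 hx.2)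
  · exact hg.add_le_apply_of_lt hKΔ hx.1 hx.2 (not_le.1 hb)

end CallPut

/-- Game call–put option with large penalty (`Δ > K`): with
`F(x₁, x₂) = (x₁ - x₂ + K)⁺`, the function `R(x₁, x₂) = x₁ + K` for
`(x₁, x₂) ∉ [Δ - K, ∞) × [Δ, ∞)`, `R(x₁, x₂) = (x₁ - x₂ + K)⁺ + Δ` for
`(x₁, x₂) ∈ [Δ - K, ∞) × [Δ, ∞)` belongs to `𝒢` and is its minimal element. -/
theorem call_put_large_penalty (K Δ : ℝ) (hK : 0 < K) (hΔK : K < Δ) :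
    memG2 (fun p => max (p.1 - p.2 + K) 0) Δ
      (fun p => if Δ - K ≤ p.1 ∧ Δ ≤ p.2 then max (p.1 - p.2 + K) 0 + Δ
        else p.1 + K) ∧
    ∀ g : ℝ × ℝ → ℝ, memG2 (fun p => max (p.1 - p.2 + K) 0) Δ g →
      ∀ p ∈ quadrant,
        (if Δ - K ≤ p.1 ∧ Δ ≤ p.2 then max (p.1 - p.2 + K) 0 + Δ
          else p.1 + K) ≤ g p := by
  have hR := ite_callPut_eq_min K Δ
  refine ⟨?_, fun g hg p hp => (hR p).trans_le (hg.min_le hΔK.le hp)⟩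
  have h := memG2_callPut_min (Δ := Δ) hK.le (hK.trans hΔK).le
  rw [← funext hR] at h
  exact h

end
end
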